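/- Let N ≥ 3 and k = (k_0,…,k_{r-1}) positive integers summing to N. For ℓ ∈ Fin N let P_ℓ be the orthogonal projection in L²(μ_{N,k}) onto the functions on V_{N,k} depending only on the coordinate x_ℓ, and set P = (1/N) Σ_ℓ P_ℓ. Then the eigenvalue 1 of P has multiplicity one with eigenspace the constant functions. -/

import Mathlib

open scoped Classical BigOperators

/-- The multislice: tuples `x : Fin N → Fin r` in which each value `m` is
attained exactly `k m` times. -/
def multislice (N r : ℕ) (k : Fin r → ℕ) : Finset (Fin N → Fin r) :=
  Finset.univ.filter fun x => ∀ m : Fin r,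
    (Finset.univ.filter fun ℓ => x ℓ = m).card = k m

/-- `P_ℓ`: conditional expectation given the coordinate `x ℓ` (with respect to
the uniform measure on the multislice). -/
noncomputable def Pl (N r : ℕ) (k : Fin r → ℕ) (ℓ : Fin N)
    (f : (Fin N → Fin r) → ℝ) (x : Fin N → Fin r) : ℝ :=
  (∑ y ∈ (multislice N r k).filter (fun y => y ℓ = x ℓ), f y)
    / (((multislice N r k).filter (fun y => y ℓ = x ℓ)).card : ℝ)

/-- `P = (1/N) ∑ ℓ, P_ℓ`. -/
noncomputable def Pop (N r : ℕ) (k : Fin r → ℕ)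
    (f : (Fin N → Fin r) → ℝ) (x : Fin N → Fin r) : ℝ :=
  (1 / (N : ℝ)) * ∑ ℓ, Pl N r k ℓ f x

/-!
A maximum principle. `P` averages the averages `P_ℓ`, and `P_ℓ f x` averages `f` over the
vertices sharing the coordinate `x ℓ` with `x`. So if `P f = f` and `f` attains its maximum
at `x`, then `f` is maximal at every vertex sharing some coordinate with `x`. For `N ≥ 3` a
transposition of two coordinates fixes a third one, and transpositions connect the multislice,
so the maximum spreads everywhere.
-/

open Finset

theorem Finset.eq_of_expect_eq_of_le {ι α : Type*} [AddCommMonoid α] [PartialOrder α]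
    [IsOrderedCancelAddMonoid α] [Module ℚ≥0 α] [PosSMulStrictMono ℚ≥0 α]
    {s : Finset ι} {g : ι → α} {M : α}
    (hle : ∀ i ∈ s, g i ≤ M) (hexp : 𝔼 i ∈ s, g i = M) : ∀ i ∈ s, g i = M := by
  by_contra! ⟨i, hi, hne⟩
  exact (expect_lt hle ⟨i, hi, (hle i hi).lt_of_ne hne⟩).ne hexp

theorem hammingDist_comp_swap_lt {ι β : Type*} [Fintype ι] [DecidableEq ι] [DecidableEq β]
    {x y : ι → β} {i j : ι} (hi : x i ≠ y i) (hj : x j = y i) (hyj : y j ≠ y i) :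
    hammingDist (x ∘ Equiv.swap i j) y < hammingDist x y := by
  refine card_lt_card ((ssubset_iff_of_subset ?_).2 ⟨i, by simpa using hi, by simpa using hj⟩)
  intro ℓ
  simp only [mem_filter, mem_univ, true_and, Function.comp_apply]
  rcases eq_or_ne ℓ i with rfl | hℓi
  · simp [hj]
  rcases eq_or_ne ℓ j with rfl | hℓj
  · exact fun _ => hj ▸ hyj.symm
  · simp [Equiv.swap_apply_of_ne_of_ne hℓi hℓj]

section Multislice

variable {N r : ℕ} {k : Fin r → ℕ}

theorem comp_perm_mem_multislice {x : Fin N → Fin r} (hx : x ∈ multislice N r k)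
    (σ : Equiv.Perm (Fin N)) : x ∘ σ ∈ multislice N r k := by
  simp only [multislice, mem_filter, mem_univ, true_and] at hx ⊢
  intro m
  rw [← hx m]
  exact card_equiv σ (by simp)

theorem exists_apply_eq_of_mem_multislice {x y : Fin N → Fin r} (hx : x ∈ multislice N r k)
    (hy : y ∈ multislice N r k) {i : Fin N} (hi : x i ≠ y i) :
    ∃ j, x j = y i ∧ y j ≠ y i := by
  simp only [multislice, mem_filter, mem_univ, true_and] at hx hy
  set A := univ.filter fun ℓ => x ℓ = y i
  set B := univ.filter fun ℓ => y ℓ = y i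
  have hBA : (B \ A).Nonempty := ⟨i, by simpa [A, B] using hi⟩
  obtain ⟨j, hj⟩ : (A \ B).Nonempty := by
    rw [← card_pos, card_sdiff_comm ((hx _).trans (hy _).symm)]
    exact hBA.card_pos
  exact ⟨j, by simpa [A, B] using hj⟩

theorem reflTransGen_swap_of_mem_multislice {x y : Fin N → Fin r}
    (hx : x ∈ multislice N r k) (hy : y ∈ multislice N r k) :
    Relation.ReflTransGen (fun a b => ∃ i j, b = a ∘ Equiv.swap i j) x y := by
  induction hd : hammingDist x y using Nat.strong_induction_on generalizing x with
  | _ d ih =>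
    obtain rfl | hxy := eq_or_ne x y
    · exact .refl
    obtain ⟨i, hi⟩ := Function.ne_iff.1 hxy
    obtain ⟨j, hj, hyj⟩ := exists_apply_eq_of_mem_multislice hx hy hi
    refine .head ⟨i, j, rfl⟩ (ih _ ?_ (comp_perm_mem_multislice hx _) rfl)
    exact hd ▸ hammingDist_comp_swap_lt hi hj hyj

theorem Pl_eq_expect (ℓ : Fin N) (f : (Fin N → Fin r) → ℝ) (x : Fin N → Fin r) :
    Pl N r k ℓ f x = 𝔼 y ∈ (multislice N r k).filter (fun y => y ℓ = x ℓ), f y :=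
  (expect_eq_sum_div_card _ _).symm

theorem Pop_eq_expect (f : (Fin N → Fin r) → ℝ) (x : Fin N → Fin r) :
    Pop N r k f x = 𝔼 ℓ, Pl N r k ℓ f x := by
  rw [Pop, Fintype.expect_eq_sum_div_card, Fintype.card_fin, one_div_mul_eq_div]

theorem Pl_le {f : (Fin N → Fin r) → ℝ} {M : ℝ} (hf : ∀ y ∈ multislice N r k, f y ≤ M)
    {x : Fin N → Fin r} (hx : x ∈ multislice N r k) (ℓ : Fin N) : Pl N r k ℓ f x ≤ M := by
  rw [Pl_eq_expect]
  exact expect_le ⟨x, mem_filter.2 ⟨hx, rfl⟩⟩ fun y hy => hf y (mem_filter.1 hy).1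

theorem Pl_eq_of_eqOn {f : (Fin N → Fin r) → ℝ} {c : ℝ}
    (hf : ∀ y ∈ multislice N r k, f y = c)
    {x : Fin N → Fin r} (hx : x ∈ multislice N r k) (ℓ : Fin N) : Pl N r k ℓ f x = c := by
  have hs : ((multislice N r k).filter fun y => y ℓ = x ℓ).Nonempty :=
    ⟨x, mem_filter.2 ⟨hx, rfl⟩⟩
  rw [Pl_eq_expect, expect_congr rfl fun y hy => hf y (mem_filter.1 hy).1,
    expect_const hs]

theorem eq_of_Pop_eq_of_le {f : (Fin N → Fin r) → ℝ} {M : ℝ}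
    (hf : ∀ y ∈ multislice N r k, f y ≤ M) {x : Fin N → Fin r} (hx : x ∈ multislice N r k)
    (hPx : Pop N r k f x = M) {y : Fin N → Fin r} (hy : y ∈ multislice N r k) {ℓ : Fin N}
    (hyx : y ℓ = x ℓ) : f y = M := by
  have hPl : Pl N r k ℓ f x = M :=
    eq_of_expect_eq_of_le (fun ℓ _ => Pl_le hf hx ℓ) (Pop_eq_expect f x ▸ hPx) ℓ
      (mem_univ ℓ)
  rw [Pl_eq_expect] at hPl
  exact eq_of_expect_eq_of_le (fun z hz => hf z (mem_filter.1 hz).1) hPl y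
    (mem_filter.2 ⟨hy, hyx⟩)

theorem eq_of_comp_swap_eq_max (hN : 3 ≤ N) {f : (Fin N → Fin r) → ℝ} {M : ℝ}
    (hfix : ∀ x ∈ multislice N r k, Pop N r k f x = f x)
    (hf : ∀ y ∈ multislice N r k, f y ≤ M) {x : Fin N → Fin r} (hx : x ∈ multislice N r k)
    (i j : Fin N) (hM : f (x ∘ Equiv.swap i j) = M) : f x = M := by
  obtain ⟨ℓ, hℓi, hℓj⟩ := Fin.exists_ne_and_ne_of_two_lt i j hN
  have hx' := comp_perm_mem_multislice hx (Equiv.swap i j)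
  exact eq_of_Pop_eq_of_le hf hx' ((hfix _ hx').trans hM) hx (ℓ := ℓ)
    (by simp [Equiv.swap_apply_of_ne_of_ne hℓi hℓj])

end Multislice

theorem Pop_fixed_iff_constant_general (N r : ℕ) (hN : 3 ≤ N) (k : Fin r → ℕ)
    (f : (Fin N → Fin r) → ℝ) :
    (∀ x ∈ multislice N r k, Pop N r k f x = f x) ↔
      ∃ c : ℝ, ∀ x ∈ multislice N r k, f x = c := by
  constructor
  · intro hfix
    obtain hempty | hne := (multislice N r k).eq_empty_or_nonempty
    · exact ⟨0, by simp [hempty]⟩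
    obtain ⟨x₀, hx₀, hmax⟩ := exists_max_image _ f hne
    refine ⟨f x₀, fun x hx => ?_⟩
    induction reflTransGen_swap_of_mem_multislice hx hx₀
      using Relation.ReflTransGen.head_induction_on with
    | refl => rfl
    | head hstep _ ih =>
      obtain ⟨i, j, rfl⟩ := hstep
      exact eq_of_comp_swap_eq_max hN hfix hmax hx i j (ih (comp_perm_mem_multislice hx _))
  · rintro ⟨c, hc⟩ x hx
    have : NeZero N := ⟨by omega⟩
    rw [Pop_eq_expect]
    simp_rw [Pl_eq_of_eqOn hc hx]
    rw [Fintype.expect_const, hc x hx]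

/-- For `N ≥ 3`, the eigenvalue `1` of `P` has multiplicity one: `P f = f` on
the multislice iff `f` is constant there. -/
theorem Pop_fixed_iff_constant (N r : ℕ) (hN : 3 ≤ N) (k : Fin r → ℕ)
    (hk : ∑ m, k m = N) (hpos : ∀ m, 1 ≤ k m)
    (f : (Fin N → Fin r) → ℝ) :
    (∀ x ∈ multislice N r k, Pop N r k f x = f x) ↔
      ∃ c : ℝ, ∀ x ∈ multislice N r k, f x = c :=
  Pop_fixed_iff_constant_general N r hN k f
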